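/- Let d ≥ 1, m₀ > 0, α > 0, λ > 0, and let r be a Borel probability measure on ℝ with r({0}) = 0 and finite fourth absolute moment, so that r_4 = ∫_ℝ s⁴ dr(s) > 0. Then there exists a real-valued Schwartz function f on ℝ^d such that the truncated four-point Schwinger function S_4^T(f, f, f, f) = λ·r_4·∫_{ℝ^d} ((G*f)(y))⁴ dy is strictly positive. In particular, the truncated four-point function of the convoluted generalized white noise model does not vanish identically when λ > 0. -/

import Mathlib

open MeasureTheory Filter Topology

/-- The convoluted test function `G*f`, defined as the inverse Fourier transform of the
product of the multiplier `k ↦ (‖k‖² + m₀²)^(−α)` with the Fourier transform of `f`. -/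
noncomputable def Gconv (d : ℕ) (m0 α : ℝ)
    (f : SchwartzMap (EuclideanSpace ℝ (Fin d)) ℂ) :
    EuclideanSpace ℝ (Fin d) → ℂ :=
  FourierTransformInv.fourierInv
    (fun k => (((‖k‖ ^ 2 + m0 ^ 2) ^ (-α) : ℝ) : ℂ) *
      FourierTransform.fourier (fun x => f x) k)

/-!
Take `f = 𝓕⁻ φ` for a real, even, nonnegative bump `φ` with `φ 0 > 0`. Evenness makes `f` real,
and `G*f = 𝓕⁻ (m φ)` with the positive multiplier `m`, again a Schwartz function. Its value at the
origin is `∫ m φ > 0`, so the continuous, nonnegative, integrable function `(Re G*f)⁴` is positive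
near `0` and has positive integral; `r₄ > 0` because `r` is not concentrated at `0`.
-/

open scoped ContDiff FourierTransform ComplexConjugate SchwartzMap RealInnerProductSpace

theorem integral_pow_pos_of_measure_singleton_zero {r : Measure ℝ} [NeZero r] {n : ℕ}
    (hn : Even n) (hn0 : n ≠ 0) (hr0 : r {0} = 0) (hint : Integrable (fun s => s ^ n) r) :
    0 < ∫ s, s ^ n ∂r := by
  rw [integral_pos_iff_support_of_nonneg (fun s => hn.pow_nonneg s) hint]
  have hsupp : Function.support (fun s : ℝ => s ^ n) = {0}ᶜ := by
    ext s; simp [pow_eq_zero_iff hn0]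
  rw [hsupp, pos_iff_ne_zero]
  intro hcompl
  refine NeZero.ne r (Measure.measure_univ_eq_zero.mp (le_antisymm ?_ bot_le))
  simpa [hr0, hcompl] using measure_univ_le_add_compl (μ := r) {0}

theorem SchwartzMap.integrable_re_pow {E : Type*} [NormedAddCommGroup E] [NormedSpace ℝ E]
    [MeasurableSpace E] [BorelSpace E] (μ : Measure E)
    [μ.HasTemperateGrowth] (h : 𝓢(E, ℂ)) {n : ℕ} (hn : n ≠ 0) :
    Integrable (fun y => (h y).re ^ n) μ := by
  have hre : MemLp (fun y => (h y).re) n μ := (h.memLp n μ).re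
  exact (hre.integrable_norm_pow hn).mono' (hre.aestronglyMeasurable.pow n)
    (Eventually.of_forall fun y => (norm_pow _ n).le)

theorem SchwartzMap.integral_re_pow_pos {E : Type*} [NormedAddCommGroup E] [NormedSpace ℝ E]
    [MeasurableSpace E] [BorelSpace E] (μ : Measure E)
    [μ.HasTemperateGrowth] [μ.IsOpenPosMeasure] (h : 𝓢(E, ℂ)) {n : ℕ} (hn : Even n)
    (hn0 : n ≠ 0) {x : E} (hx : (h x).re ≠ 0) :
    0 < ∫ y, (h y).re ^ n ∂μ :=
  integral_pos_of_integrable_nonneg_nonzero (by fun_prop) (h.integrable_re_pow μ hn0)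
    (fun y => hn.pow_nonneg _) (pow_ne_zero n hx)

theorem contDiff_norm_sq_add_sq_rpow {V : Type*} [NormedAddCommGroup V] [InnerProductSpace ℝ V]
    {m0 : ℝ} (hm : m0 ≠ 0) (s : ℝ) :
    ContDiff ℝ ∞ fun k : V => (‖k‖ ^ 2 + m0 ^ 2) ^ s :=
  contDiff_iff_contDiffAt.mpr fun _ =>
    ((contDiff_norm_sq ℝ).add contDiff_const).contDiffAt.rpow_const_of_ne (by positivity)

section Fourier

variable {V : Type*} [NormedAddCommGroup V] [InnerProductSpace ℝ V] [FiniteDimensional ℝ V]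
  [MeasurableSpace V] [BorelSpace V]

theorem Real.im_fourierInv_eq_zero_of_hermitian {g : V → ℂ} (hg : ∀ v, g (-v) = conj (g v))
    (x : V) :
    (𝓕⁻ g x).im = 0 := by
  rw [← Complex.conj_eq_iff_im, Real.fourierInv_eq', ← integral_conj]
  set F : V → ℂ := fun v => Complex.exp (↑(2 * Real.pi * ⟪v, x⟫) * Complex.I) • g v
  have hF : ∀ v, conj (F v) = F (-v) := by
    intro v
    simp only [F, smul_eq_mul, map_mul, ← Complex.exp_conj, Complex.conj_ofReal, Complex.conj_I,
      hg, inner_neg_left]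
    push_cast
    ring_nf
  change ∫ v, conj (F v) = ∫ v, F v
  simp_rw [hF]
  exact integral_neg_eq_self F volume

variable {ψ : V → ℝ} (hs : HasCompactSupport ψ) (hψ : ContDiff ℝ ∞ ψ)

noncomputable def ofRealSchwartzMap : 𝓢(V, ℂ) :=
  (hs.comp_left Complex.ofReal_zero).toSchwartzMap (Complex.ofRealCLM.contDiff.comp hψ)

omit [FiniteDimensional ℝ V] [MeasurableSpace V] [BorelSpace V] in
@[simp]
theorem ofRealSchwartzMap_apply (v : V) : ofRealSchwartzMap hs hψ v = ψ v := rfl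

theorem im_fourierInv_ofRealSchwartzMap (heven : ∀ v, ψ (-v) = ψ v) (x : V) :
    (𝓕⁻ (ofRealSchwartzMap hs hψ) x).im = 0 := by
  rw [SchwartzMap.fourierInv_coe]
  exact Real.im_fourierInv_eq_zero_of_hermitian (fun v => by simp [heven]) x

theorem re_fourierInv_ofRealSchwartzMap_zero_pos (hnonneg : 0 ≤ ψ) {x : V} (hx : ψ x ≠ 0) :
    0 < (𝓕⁻ (ofRealSchwartzMap hs hψ) 0).re := by
  simpa [SchwartzMap.fourierInv_coe, Real.fourierInv_eq, integral_complex_ofReal] using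
    hψ.continuous.integral_pos_of_hasCompactSupport_nonneg_nonzero hs hnonneg hx

end Fourier

theorem Gconv_fourierInv_ofRealSchwartzMap {d : ℕ} {m0 : ℝ} (hm : m0 ≠ 0) (α : ℝ)
    {ψ : EuclideanSpace ℝ (Fin d) → ℝ} (hs : HasCompactSupport ψ) (hψ : ContDiff ℝ ∞ ψ) :
    Gconv d m0 α (𝓕⁻ (ofRealSchwartzMap hs hψ)) =
      ⇑(𝓕⁻ (ofRealSchwartzMap (ψ := (fun k => (‖k‖ ^ 2 + m0 ^ 2) ^ (-α)) * ψ) hs.mul_left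
        ((contDiff_norm_sq_add_sq_rpow hm (-α)).mul hψ)) : 𝓢(EuclideanSpace ℝ (Fin d), ℂ)) := by
  have hfourier :
      𝓕 (fun x => (𝓕⁻ (ofRealSchwartzMap hs hψ) : 𝓢(EuclideanSpace ℝ (Fin d), ℂ)) x) =
        ofRealSchwartzMap hs hψ := by
    rw [← SchwartzMap.fourier_coe, FourierInvPair.fourier_fourierInv_eq]
  simp only [Gconv, hfourier]
  rw [SchwartzMap.fourierInv_coe]
  congr 1
  ext k
  simp

theorem truncated_four_point_function_nonvanishing_general
    (d : ℕ) (m0 α lam : ℝ) (hm : 0 < m0)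
    (hlam : 0 < lam)
    (r : Measure ℝ) [IsProbabilityMeasure r] (hr0 : r {0} = 0)
    (hmom4 : Integrable (fun s : ℝ => |s| ^ 4) r) :
    ∃ f : SchwartzMap (EuclideanSpace ℝ (Fin d)) ℂ,
      (∀ x, (f x).im = 0) ∧
      Integrable (fun y => (Gconv d m0 α f y).re ^ 4) ∧
      0 < lam * (∫ s : ℝ, s ^ 4 ∂r) * ∫ y, (Gconv d m0 α f y).re ^ 4 := by
  let φ : ContDiffBump (0 : EuclideanSpace ℝ (Fin d)) := ⟨1, 2, one_pos, one_lt_two⟩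
  have h4 : Even 4 := by decide
  have hr4 : 0 < ∫ s, s ^ 4 ∂r :=
    integral_pow_pos_of_measure_singleton_zero h4 four_ne_zero hr0
      (by simpa only [h4.pow_abs] using hmom4)
  refine ⟨_, im_fourierInv_ofRealSchwartzMap φ.hasCompactSupport φ.contDiff φ.neg, ?_, ?_⟩ <;>
    rw [Gconv_fourierInv_ofRealSchwartzMap hm.ne' α φ.hasCompactSupport φ.contDiff]
  · exact SchwartzMap.integrable_re_pow volume _ four_ne_zero
  · refine mul_pos (mul_pos hlam hr4)
      (SchwartzMap.integral_re_pow_pos volume _ h4 four_ne_zero (x := 0)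
        (re_fourierInv_ofRealSchwartzMap_zero_pos _ _ (x := 0) ?_ ?_).ne')
    · exact fun k => mul_nonneg (by positivity) φ.nonneg
    · exact (mul_pos (by positivity) (φ.pos_of_mem_ball (Metric.mem_ball_self φ.rOut_pos))).ne'

theorem truncated_four_point_function_nonvanishing
    (d : ℕ) (hd : 1 ≤ d) (m0 α lam : ℝ) (hm : 0 < m0) (hα : 0 < α)
    (hlam : 0 < lam)
    (r : Measure ℝ) [IsProbabilityMeasure r] (hr0 : r {0} = 0)
    (hmom4 : Integrable (fun s : ℝ => |s| ^ 4) r) :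
    ∃ f : SchwartzMap (EuclideanSpace ℝ (Fin d)) ℂ,
      (∀ x, (f x).im = 0) ∧
      Integrable (fun y => (Gconv d m0 α f y).re ^ 4) ∧
      0 < lam * (∫ s : ℝ, s ^ 4 ∂r) * ∫ y, (Gconv d m0 α f y).re ^ 4 :=
  truncated_four_point_function_nonvanishing_general d m0 α lam hm hlam r hr0 hmom4
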